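/- arXiv:1008.5163 — 4 statements merged into one kernel-verified Lean document; each statement's English description precedes it below -/
import Mathlib

section
/- Let n ≥ 1 and let Δ be a real symmetric n × n matrix with zero diagonal (Δ(i,i) = 0 for all i). Let H = I − (1/n)·𝟙𝟙ᵀ be the centering matrix, where 𝟙 is the all-ones vector, and set A = −(1/2)·H·Δ·H. Then for all i, j one has A(i,i) + A(j,j) − 2·A(i,j) = Δ(i,j). -/
lemma hdh_apply {n : ℕ} (Δ : Matrix (Fin n) (Fin n) ℝ)
    (H : Matrix (Fin n) (Fin n) ℝ)
    (hH : H = 1 - (n : ℝ)⁻¹ • Matrix.of (fun _ _ => (1 : ℝ))) (i j : Fin n) :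
    (H * Δ * H) i j = Δ i j - (n : ℝ)⁻¹ * (∑ k, Δ i k) - (n : ℝ)⁻¹ * (∑ k, Δ k j)
      + (n : ℝ)⁻¹ * (n : ℝ)⁻¹ * (∑ k, ∑ l, Δ k l) := by
  subst hH
  simp only [Matrix.mul_apply, Matrix.sub_apply, Matrix.smul_apply, Matrix.one_apply,
    Matrix.of_apply, smul_eq_mul, mul_one, sub_mul, mul_sub, Finset.sum_sub_distrib,
    Finset.sum_ite_eq, Finset.sum_ite_eq', Finset.mem_univ, if_true, Finset.mul_sum,
    Finset.sum_mul]
  simp only [ite_mul, mul_ite, one_mul, zero_mul, mul_one, mul_zero,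
    Finset.sum_ite_eq, Finset.sum_ite_eq', Finset.mem_univ, if_true,
    Finset.sum_ite_irrel, Finset.sum_const_zero]
  ring_nf
  simp [sq, mul_comm, mul_left_comm, mul_assoc]
  exact Finset.sum_comm

/-- Double centering of classical MDS: if `Δ` is symmetric with zero diagonal,
`H = I - (1/n)𝟙𝟙ᵀ` and `A = -(1/2) H Δ H`, then
`A i i + A j j - 2 A i j = Δ i j` for all `i, j`. -/
theorem double_centering_recovers_dissimilarity {n : ℕ} (hn : 1 ≤ n)
    (Δ : Matrix (Fin n) (Fin n) ℝ) (hΔ : Δ.IsSymm) (hdiag : ∀ i, Δ i i = 0) :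
    let H : Matrix (Fin n) (Fin n) ℝ :=
      1 - (n : ℝ)⁻¹ • Matrix.of (fun _ _ => (1 : ℝ))
    let A : Matrix (Fin n) (Fin n) ℝ := (-(1 / 2) : ℝ) • (H * Δ * H)
    ∀ i j, A i i + A j j - 2 * A i j = Δ i j := by
  intro H A i j
  have hrow : ∀ a : Fin n, (∑ k, Δ k a) = ∑ k, Δ a k := by
    intro a
    refine Finset.sum_congr rfl fun k _ => ?_
    exact congrFun (congrFun hΔ a) k
  have h1 := hdh_apply Δ H rfl i i
  have h2 := hdh_apply Δ H rfl j j
  have h3 := hdh_apply Δ H rfl i j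
  show (-(1/2) : ℝ) * (H * Δ * H) i i + (-(1/2) : ℝ) * (H * Δ * H) j j
      - 2 * ((-(1/2) : ℝ) * (H * Δ * H) i j) = Δ i j
  rw [h1, h2, h3, hdiag i, hdiag j, hrow i, hrow j]
  ring
end

section
/- Let n ≥ 1 and let Δ be a real symmetric n × n matrix with zero diagonal. Then there exist a map g : Fin n → ℝ^n (Euclidean space of dimension n) and a constant c ≥ 0 such that for all i ≠ j, ‖g(i) − g(j)‖² = Δ(i,j) + c. In particular, the rank-ordering of the off-diagonal entries of Δ is exactly the rank-ordering of the squared distances ‖g(i) − g(j)‖², and any additive gap Δ(i,j) + m ≤ Δ(k,ℓ) is preserved as ‖g(i) − g(j)‖² + m ≤ ‖g(k) − g(ℓ)‖². -/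
/-!
For symmetric `Δ` every eigenvalue is at most the operator norm `‖Δ‖`, so
`M = ½ (‖Δ‖ • 1 - Δ)` is positive semidefinite and hence the Gram matrix of vectors `g i`.
Since `M i i = ‖Δ‖ / 2` and `M i j = -Δ i j / 2` off the diagonal,
`‖g i - g j‖² = M i i + M j j - 2 M i j = Δ i j + ‖Δ‖`.
Shifting by `‖Δ‖` instead of the paper's `-2 λₙ(-½ H Δ H)` avoids the centering matrix.
-/

open scoped MatrixOrder Matrix.Norms.L2Operator ComplexOrder

namespace Matrix

variable {𝕜 ι : Type*} [RCLike 𝕜] [Fintype ι] [DecidableEq ι]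

theorem PosSemidef.exists_gram_eq {M : Matrix ι ι 𝕜} (hM : M.PosSemidef) :
    ∃ v : ι → EuclideanSpace 𝕜 ι, gram 𝕜 v = M := by
  obtain ⟨B, rfl⟩ := CStarAlgebra.nonneg_iff_eq_star_mul_self.mp hM.nonneg
  refine ⟨fun i ↦ WithLp.toLp 2 fun k ↦ B k i, ?_⟩
  ext i j
  simp [gram_apply, PiLp.inner_apply, mul_apply, mul_comm]

theorem l2_opNorm_one_le : ‖(1 : Matrix ι ι 𝕜)‖ ≤ 1 := by
  rw [cstar_norm_def, map_one]
  exact ContinuousLinearMap.norm_id_le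

theorem le_l2_opNorm_of_mem_spectrum_real {A : Matrix ι ι 𝕜} {x : ℝ} (hx : x ∈ spectrum ℝ A) :
    x ≤ ‖A‖ := by
  rw [← spectrum.algebraMap_mem_iff 𝕜] at hx
  calc x ≤ ‖algebraMap ℝ 𝕜 x‖ := by simpa using le_abs_self x
    _ ≤ ‖A‖ * ‖(1 : Matrix ι ι 𝕜)‖ := spectrum.norm_le_norm_mul_of_mem hx
    _ ≤ ‖A‖ := mul_le_of_le_one_right (norm_nonneg A) l2_opNorm_one_le

theorem IsHermitian.posSemidef_l2_opNorm_smul_one_sub {A : Matrix ι ι 𝕜} (hA : A.IsHermitian) :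
    (‖A‖ • (1 : Matrix ι ι 𝕜) - A).PosSemidef := by
  rw [← Algebra.algebraMap_eq_smul_one]
  exact le_algebraMap_of_spectrum_le (fun _ ↦ le_l2_opNorm_of_mem_spectrum_real) hA

end Matrix

theorem norm_sub_sq_eq_gram {E ι : Type*} [NormedAddCommGroup E] [InnerProductSpace ℝ E]
    (v : ι → E) (i j : ι) :
    ‖v i - v j‖ ^ 2 = Matrix.gram ℝ v i i + Matrix.gram ℝ v j j - 2 * Matrix.gram ℝ v i j := by
  simp only [Matrix.gram_apply, real_inner_self_eq_norm_sq, norm_sub_sq_real]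
  ring

theorem constant_shift_embedding_general {n : ℕ}
    (Δ : Matrix (Fin n) (Fin n) ℝ) (hΔ : Δ.IsSymm) (hdiag : ∀ i, Δ i i = 0) :
    ∃ (g : Fin n → EuclideanSpace ℝ (Fin n)) (c : ℝ), 0 ≤ c ∧
      ∀ i j, i ≠ j → ‖g i - g j‖ ^ 2 = Δ i j + c := by
  have hM : ((1 / 2 : ℝ) • (‖Δ‖ • 1 - Δ)).PosSemidef :=
    (Matrix.isHermitian_iff_isSymm.mpr hΔ).posSemidef_l2_opNorm_smul_one_sub.smul (by norm_num)
  obtain ⟨g, hg⟩ := hM.exists_gram_eq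
  refine ⟨g, ‖Δ‖, norm_nonneg Δ, fun i j hij ↦ ?_⟩
  rw [norm_sub_sq_eq_gram, hg]
  simp only [Matrix.smul_apply, Matrix.sub_apply, Matrix.one_apply_eq, Matrix.one_apply_ne hij, hdiag,
    smul_eq_mul]
  ring

/-- Constant-shift embedding: any symmetric matrix `Δ` with zero diagonal can be
realized, up to an additive nonnegative constant `c`, as squared distances of an
embedding into `ℝ^n`: `‖g i - g j‖² = Δ i j + c` for all `i ≠ j`. -/
theorem constant_shift_embedding {n : ℕ} (hn : 1 ≤ n)
    (Δ : Matrix (Fin n) (Fin n) ℝ) (hΔ : Δ.IsSymm) (hdiag : ∀ i, Δ i i = 0) :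
    ∃ (g : Fin n → EuclideanSpace ℝ (Fin n)) (c : ℝ), 0 ≤ c ∧
      ∀ i j, i ≠ j → ‖g i - g j‖ ^ 2 = Δ i j + c :=
  constant_shift_embedding_general Δ hΔ hdiag
end

section
/- Let Z be a set and T a collection of ordered triples (a,b,c) of elements of Z. Form the relative comparison set C(T) ⊆ Z⁴ containing, for each (a,b,c) ∈ T, the two comparisons (a,b,a,c) and (b,c,a,c). Then there exists a one-to-one function f : Z → ℝ such that for each (a,b,c) ∈ T either f(a) < f(b) < f(c) or f(c) < f(b) < f(a), if and only if there exists a one-to-one function g : Z → ℝ such that (g(i) − g(j))² < (g(k) − g(ℓ))² for every (i,j,k,ℓ) ∈ C(T). -/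
/-- Reduction from Betweenness to one-dimensional partial order embedding:
a Betweenness instance `(Z, T)` is solvable iff the associated relative comparison
set `C(T)` admits an injective one-dimensional embedding satisfying all comparisons. -/
theorem betweenness_iff_one_dim_embedding {Z : Type*} (T : Set (Z × Z × Z)) :
    (∃ f : Z → ℝ, Function.Injective f ∧
      ∀ t ∈ T, (f t.1 < f t.2.1 ∧ f t.2.1 < f t.2.2) ∨
               (f t.2.2 < f t.2.1 ∧ f t.2.1 < f t.1)) ↔
    (∃ g : Z → ℝ, Function.Injective g ∧
      ∀ q ∈ {q : Z × Z × Z × Z | ∃ t ∈ T,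
          q = (t.1, t.2.1, t.1, t.2.2) ∨ q = (t.2.1, t.2.2, t.1, t.2.2)},
        (g q.1 - g q.2.1) ^ 2 < (g q.2.2.1 - g q.2.2.2) ^ 2) := by
  constructor
  · rintro ⟨f, hf, hT⟩
    refine ⟨f, hf, ?_⟩
    rintro q ⟨t, ht, hq | hq⟩ <;> subst hq <;>
      rcases hT t ht with ⟨h1, h2⟩ | ⟨h1, h2⟩ <;> dsimp <;> nlinarith
  · rintro ⟨g, hg, hC⟩
    refine ⟨g, hg, ?_⟩
    intro t ht
    have h1 := hC (t.1, t.2.1, t.1, t.2.2) ⟨t, ht, Or.inl rfl⟩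
    have h2 := hC (t.2.1, t.2.2, t.1, t.2.2) ⟨t, ht, Or.inr rfl⟩
    dsimp at h1 h2
    rcases lt_trichotomy (g t.1) (g t.2.2) with h | h | h
    · left; constructor <;> nlinarith
    · exfalso; nlinarith
    · right; constructor <;> nlinarith
end

section
/- There do not exist four real numbers x₀, x₁, x₂, x₃ such that each of the four 'side' squared distances (x₀−x₁)², (x₁−x₂)², (x₂−x₃)², (x₃−x₀)² is strictly less than each of the two 'diagonal' squared distances (x₀−x₂)² and (x₁−x₃)². In other words, the partial order over distances induced by the vertices of a square (each side shorter than each diagonal) cannot be satisfied by any embedding into ℝ¹. -/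
/-- The distance partial order of a square (each side strictly shorter than each
diagonal) cannot be realized by any four points on the real line. -/
theorem square_not_embeddable_in_R1 :
    ¬ ∃ x₀ x₁ x₂ x₃ : ℝ,
      ((x₀ - x₁) ^ 2 < (x₀ - x₂) ^ 2 ∧ (x₀ - x₁) ^ 2 < (x₁ - x₃) ^ 2) ∧
      ((x₁ - x₂) ^ 2 < (x₀ - x₂) ^ 2 ∧ (x₁ - x₂) ^ 2 < (x₁ - x₃) ^ 2) ∧
      ((x₂ - x₃) ^ 2 < (x₀ - x₂) ^ 2 ∧ (x₂ - x₃) ^ 2 < (x₁ - x₃) ^ 2) ∧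
      ((x₃ - x₀) ^ 2 < (x₀ - x₂) ^ 2 ∧ (x₃ - x₀) ^ 2 < (x₁ - x₃) ^ 2) := by
  rintro ⟨x₀, x₁, x₂, x₃, ⟨h1, h2⟩, ⟨h3, h4⟩, ⟨h5, h6⟩, ⟨h7, h8⟩⟩
  nlinarith [sq_nonneg (x₀ - x₁ + x₂ - x₃), sq_nonneg (x₀ - x₁ - x₂ + x₃),
    sq_nonneg (x₀ + x₁ - x₂ - x₃), sq_nonneg (x₀ - x₂), sq_nonneg (x₁ - x₃)]
end
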